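/- Time dilation formula: let F be an ordered field, d ≥ 2, and P : F^d → F^d an affine bijection with μ²₁(P(x)-P(y)) = μ²₁(x-y) for all x, y (a Poincaré transformation). Let x, y ∈ F^d lie on the time axis (x₂=...=x_d = 0 and y₂=...=y_d = 0), let x' = P(x), y' = P(y), and suppose x ≠ y. If v ∈ F is defined by the squared-speed relation ((x'₂-y'₂)²+...+(x'_d-y'_d)²) = v·(x'₁-y'₁)² (noting x'₁ ≠ y'₁), then v ≠ 1 and (x'₁-y'₁)² = (x₁-y₁)²/(1-v). -/

import Mathlib

/-!
Since `x - y` lies on the time axis, `μ²₁(x - y) = (x₁ - y₁)² ≠ 0`, while the squared-speed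
relation rewrites `μ²₁(x' - y')` as `(1 - v)(x'₁ - y'₁)²`. Invariance of `μ²₁` equates the two,
so `1 - v ≠ 0` and the formula follows by division.
-/

/-- The Minkowski quadratic form `μ²₁` on `F^d`, `d = d' + 2 ≥ 2`. -/
def mink {F : Type*} [Field F] [LinearOrder F] [IsStrictOrderedRing F] {d : ℕ} (x : Fin (d + 2) → F) : F :=
  x 0 ^ 2 - ∑ i ∈ Finset.univ.erase 0, x i ^ 2

section

variable {F : Type*} [Field F] [LinearOrder F] [IsStrictOrderedRing F] {d : ℕ}

theorem mink_of_forall_ne_zero_eq_zero {z : Fin (d + 2) → F} (hz : ∀ i, i ≠ 0 → z i = 0) :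
    mink z = z 0 ^ 2 := by
  have hspace : ∑ i ∈ Finset.univ.erase 0, z i ^ 2 = 0 :=
    Finset.sum_eq_zero fun i hi => by rw [hz i (Finset.ne_of_mem_erase hi), zero_pow two_ne_zero]
  rw [mink, hspace, sub_zero]

theorem mink_eq_one_sub_mul_of_sum_eq {z : Fin (d + 2) → F} {v : F}
    (hv : ∑ i ∈ Finset.univ.erase 0, z i ^ 2 = v * z 0 ^ 2) :
    mink z = (1 - v) * z 0 ^ 2 := by
  rw [mink, hv]
  ring

end

theorem apply_zero_ne_of_forall_ne_zero_eq {ι M : Type*} [Zero ι] [Zero M] {x y : ι → M}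
    (hx : ∀ i, i ≠ 0 → x i = 0) (hy : ∀ i, i ≠ 0 → y i = 0) (hxy : x ≠ y) : x 0 ≠ y 0 := by
  refine fun h0 => hxy (funext fun i => ?_)
  rcases eq_or_ne i 0 with rfl | hi
  · exact h0
  · rw [hx i hi, hy i hi]

theorem ne_one_and_eq_div_of_one_sub_mul_eq {F : Type*} [Field F] {v a b : F} (hb : b ≠ 0)
    (h : (1 - v) * a = b) : v ≠ 1 ∧ a = b / (1 - v) := by
  have h1v : 1 - v ≠ 0 := left_ne_zero_of_mul (h ▸ hb)
  exact ⟨fun hv => h1v (by rw [hv, sub_self]), by rw [← h, mul_div_cancel_left₀ a h1v]⟩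

theorem stmt_19_general {F : Type*} [Field F] [LinearOrder F] [IsStrictOrderedRing F] {d : ℕ}
    (P : (Fin (d + 2) → F) → (Fin (d + 2) → F))
    (hP : ∀ x y, mink (P x - P y) = mink (x - y))
    (x y : Fin (d + 2) → F)
    (hx : ∀ i, i ≠ 0 → x i = 0) (hy : ∀ i, i ≠ 0 → y i = 0) (hxy : x ≠ y)
    (v : F)
    (hv : ∑ i ∈ Finset.univ.erase 0, (P x i - P y i) ^ 2 = v * (P x 0 - P y 0) ^ 2) :
    v ≠ 1 ∧ (P x 0 - P y 0) ^ 2 = (x 0 - y 0) ^ 2 / (1 - v) := by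
  have htime : mink (x - y) = (x 0 - y 0) ^ 2 :=
    mink_of_forall_ne_zero_eq_zero fun i hi => by simp [hx i hi, hy i hi]
  have hmoving : mink (P x - P y) = (1 - v) * (P x 0 - P y 0) ^ 2 :=
    mink_eq_one_sub_mul_of_sum_eq hv
  have hsep : (x 0 - y 0) ^ 2 ≠ 0 :=
    pow_ne_zero 2 (sub_ne_zero.mpr (apply_zero_ne_of_forall_ne_zero_eq hx hy hxy))
  exact ne_one_and_eq_div_of_one_sub_mul_eq hsep (by rw [← hmoving, ← htime, hP])

/-- Time dilation: let `P` be a Poincaré transformation of `F^d` (an affine bijection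
preserving the Minkowski squared interval of differences), let `x ≠ y` be points on the time
axis, `x' = P x`, `y' = P y`, and let `v` satisfy the squared-speed relation
`Σᵢ≥₂ (x'ᵢ - y'ᵢ)² = v·(x'₁ - y'₁)²`. Then `v ≠ 1` and
`(x'₁ - y'₁)² = (x₁ - y₁)² / (1 - v)`. -/
theorem stmt_19 {F : Type*} [Field F] [LinearOrder F] [IsStrictOrderedRing F] {d : ℕ}
    (P : (Fin (d + 2) → F) → (Fin (d + 2) → F))
    (hbij : Function.Bijective P)
    (haff : ∃ (L : (Fin (d + 2) → F) →ₗ[F] (Fin (d + 2) → F)) (b : Fin (d + 2) → F),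
        ∀ x, P x = L x + b)
    (hP : ∀ x y, mink (P x - P y) = mink (x - y))
    (x y : Fin (d + 2) → F)
    (hx : ∀ i, i ≠ 0 → x i = 0) (hy : ∀ i, i ≠ 0 → y i = 0) (hxy : x ≠ y)
    (v : F)
    (hv : ∑ i ∈ Finset.univ.erase 0, (P x i - P y i) ^ 2 = v * (P x 0 - P y 0) ^ 2) :
    v ≠ 1 ∧ (P x 0 - P y 0) ^ 2 = (x 0 - y 0) ^ 2 / (1 - v) :=
  stmt_19_general P hP x y hx hy hxy v hv
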